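/- arXiv:1306.4211 — 7 statements merged into one kernel-verified Lean document; each statement's English description precedes it below -/
import Mathlib

section
/- Let g ≥ 1 be an integer. For every ε > 0 and every finite subset F of the surface group Γ_g there exists δ > 0 with the following property: whenever A is a unital C*-algebra and u_1, v_1, …, u_g, v_g are unitaries in A satisfying ‖∏_{i=1}^g [u_i, v_i] − 1‖ < δ, there exists an (F, ε)-representation π : Γ_g → U(A) such that π(α_i) = u_i and π(β_i) = v_i for all i ∈ {1, …, g}. -/
open scoped commutatorElement

/-- The surface group relator `∏ᵢ [αᵢ, βᵢ]` in the free group on `Fin g × Bool`,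
where `(i, false)` stands for `αᵢ` and `(i, true)` for `βᵢ`. -/
def surfaceRelator (g : ℕ) : FreeGroup (Fin g × Bool) :=
  (List.ofFn fun i : Fin g =>
    ⁅FreeGroup.of ((i, false) : Fin g × Bool), FreeGroup.of ((i, true) : Fin g × Bool)⁆).prod

/-- The surface group `Γ_g = ⟨α₁, β₁, …, α_g, β_g | ∏ᵢ [αᵢ, βᵢ]⟩`. -/
def SurfaceGroup (g : ℕ) : Type :=
  PresentedGroup {surfaceRelator g}

instance (g : ℕ) : Group (SurfaceGroup g) :=
  inferInstanceAs (Group (PresentedGroup {surfaceRelator g}))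

/-- The generator `αᵢ` of the surface group. -/
def sgA {g : ℕ} (i : Fin g) : SurfaceGroup g :=
  PresentedGroup.of (i, false)

/-- The generator `βᵢ` of the surface group. -/
def sgB {g : ℕ} (i : Fin g) : SurfaceGroup g :=
  PresentedGroup.of (i, true)

/-- `π : G → U(A)` is an `(F, ε)`-representation: `π(1) = 1`,
`‖π(s⁻¹) - π(s)*‖ < ε` and `‖π(st) - π(s)π(t)‖ < ε` for all `s, t ∈ F`. -/
def IsQuasiRep {G : Type*} [Group G] {A : Type*} [NormedRing A] [StarRing A]
    (F : Set G) (ε : ℝ) (π : G → unitary A) : Prop :=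
  π 1 = 1 ∧
  (∀ s ∈ F, ‖((π s⁻¹ : A)) - star ((π s : A))‖ < ε) ∧
  (∀ s ∈ F, ∀ t ∈ F, ‖((π (s * t) : A)) - (π s : A) * (π t : A)‖ < ε)

/-!
Write `ℓ(w) = ‖φ(w) - 1‖` for a homomorphism `φ` from the free group into `U(A)`. This is a
conjugation-invariant group seminorm, so every element of the normal closure of the relator `r`
has `ℓ`-value at most `n · ℓ(r)`, where `n` is the number of conjugates of `r^{±1}` needed to write
it — a bound independent of `A` and `φ`. Lifting `Γ_g` back to the free group by a set-theoretic
section `σ` that fixes `1` and the generators, the defects `σ(s)σ(t)σ(st)⁻¹` and `σ(s⁻¹)σ(s)` lie in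
that normal closure, and there are finitely many of them for `s, t ∈ F`; so `φ ∘ σ` is an
`(F, ε)`-representation as soon as `ℓ(r) < ε / (n + 1)` for the largest such `n`.
-/

namespace GroupSeminorm

variable {G : Type*} [Group G]

def IsConjInvariant (ℓ : GroupSeminorm G) : Prop :=
  ∀ c x, ℓ (c * x * c⁻¹) = ℓ x

lemma IsConjInvariant.comp {H : Type*} [Group H] {ℓ : GroupSeminorm G} (hℓ : ℓ.IsConjInvariant)
    (φ : H →* G) : (ℓ.comp φ).IsConjInvariant := fun c x => by
  simp only [comp_apply, map_mul, map_inv]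
  exact hℓ _ _

lemma exists_le_mul_of_mem_normalClosure {r w : G} (hw : w ∈ Subgroup.normalClosure {r}) :
    ∃ n : ℕ, ∀ ℓ : GroupSeminorm G, ℓ.IsConjInvariant → ℓ w ≤ n * ℓ r := by
  let H : Subgroup G :=
    { carrier := {w | ∃ n : ℕ, ∀ ℓ : GroupSeminorm G, ℓ.IsConjInvariant → ℓ w ≤ n * ℓ r}
      one_mem' := ⟨0, fun ℓ _ => by simp⟩
      mul_mem' := fun {a b} ⟨m, hm⟩ ⟨n, hn⟩ => ⟨m + n, fun ℓ hℓ => by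
        push_cast
        linarith [map_mul_le_add ℓ a b, hm ℓ hℓ, hn ℓ hℓ]⟩
      inv_mem' := fun ⟨n, hn⟩ => ⟨n, fun ℓ hℓ => (map_inv_eq_map ℓ _).trans_le (hn ℓ hℓ)⟩ }
  have : H.Normal := ⟨fun w ⟨n, hn⟩ c => ⟨n, fun ℓ hℓ => (hℓ c w).trans_le (hn ℓ hℓ)⟩⟩
  have hr : r ∈ H := ⟨1, fun ℓ _ => by simp⟩
  exact Subgroup.normalClosure_le_normal (Set.singleton_subset_iff.2 hr) hw

lemma exists_pos_forall_lt_of_subset_normalClosure {r : G} {D : Finset G}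
    (hD : (D : Set G) ⊆ Subgroup.normalClosure {r}) {ε : ℝ} (hε : 0 < ε) :
    ∃ δ > 0, ∀ ℓ : GroupSeminorm G, ℓ.IsConjInvariant → ℓ r < δ → ∀ w ∈ D, ℓ w < ε := by
  have hbound : ∀ w ∈ D, ∃ n : ℕ, ∀ ℓ : GroupSeminorm G, ℓ.IsConjInvariant → ℓ w ≤ n * ℓ r :=
    fun w hw => exists_le_mul_of_mem_normalClosure (hD hw)
  choose! n hn using hbound
  set N := D.sup n
  refine ⟨ε / (N + 1), by positivity, fun ℓ hℓ hr w hw => ?_⟩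
  calc ℓ w ≤ n w * ℓ r := hn w hw ℓ hℓ
    _ ≤ N * ℓ r := mul_le_mul_of_nonneg_right (mod_cast D.le_sup hw) (apply_nonneg ℓ r)
    _ ≤ N * (ε / (N + 1)) := by gcongr
    _ < ε := by
      rw [mul_div_assoc', div_lt_iff₀ (by positivity)]
      linarith

end GroupSeminorm

namespace Unitary

variable (A : Type*) [NormedRing A] [StarRing A] [CStarRing A]

def normSubOne : GroupSeminorm (unitary A) where
  toFun u := ‖(u : A) - 1‖
  map_one' := by simp
  mul_le' a b := calc
    ‖((a * b : unitary A) : A) - 1‖ = ‖(a : A) * ((b : A) - 1) + ((a : A) - 1)‖ := by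
        rw [Submonoid.coe_mul]; congr 1; noncomm_ring
    _ ≤ ‖(b : A) - 1‖ + ‖(a : A) - 1‖ := by
        rw [← CStarRing.norm_coe_unitary_mul a ((b : A) - 1)]; exact norm_add_le _ _
    _ = ‖(a : A) - 1‖ + ‖(b : A) - 1‖ := add_comm _ _
  inv' a := by
    rw [← norm_star, star_sub, star_one, ← Unitary.coe_star, Unitary.star_eq_inv, inv_inv]

variable {A}

lemma normSubOne_apply (u : unitary A) : normSubOne A u = ‖(u : A) - 1‖ := rfl

lemma isConjInvariant_normSubOne : (normSubOne A).IsConjInvariant := fun c a => by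
  have h : ((c * a * c⁻¹ : unitary A) : A) - 1 = c * ((a : A) - 1) * ((c⁻¹ : unitary A) : A) := by
    simp only [mul_sub, sub_mul, mul_one, ← Submonoid.coe_mul, mul_inv_cancel,
      Submonoid.coe_one]
  rw [normSubOne_apply, normSubOne_apply, h, CStarRing.norm_mul_coe_unitary,
    CStarRing.norm_coe_unitary_mul]

lemma norm_coe_sub_coe (a b : unitary A) : ‖(a : A) - b‖ = normSubOne A (a * b⁻¹) := by
  rw [normSubOne_apply, ← CStarRing.norm_mul_coe_unitary (((a * b⁻¹ : unitary A) : A) - 1) b,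
    sub_mul, one_mul, ← Submonoid.coe_mul, inv_mul_cancel_right]

end Unitary

theorem exists_pos_isQuasiRep_comp_of_rightInverse {E : Type*} [Group E] {r : E}
    (σ : E ⧸ Subgroup.normalClosure {r} → E) (hσ : Function.RightInverse σ (↑))
    (hσ_one : σ 1 = 1) (F : Finset (E ⧸ Subgroup.normalClosure {r})) {ε : ℝ} (hε : 0 < ε) :
    ∃ δ > 0, ∀ (A : Type*) [NormedRing A] [StarRing A] [CStarRing A] (φ : E →* unitary A),
      ‖(φ r : A) - 1‖ < δ → IsQuasiRep (↑F) ε (φ ∘ σ) := by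
  classical
  let D := F.image (fun s => σ s⁻¹ * σ s) ∪
    (F ×ˢ F).image (fun p => σ p.1 * σ p.2 * (σ (p.1 * p.2))⁻¹)
  have hD : (D : Set E) ⊆ Subgroup.normalClosure {r} := by
    intro w hw
    rw [SetLike.mem_coe, ← QuotientGroup.eq_one_iff]
    simp only [D, Finset.coe_union, Finset.coe_image, Set.mem_union, Set.mem_image] at hw
    rcases hw with ⟨s, -, rfl⟩ | ⟨⟨s, t⟩, -, rfl⟩ <;> simp [hσ _]
  obtain ⟨δ, hδ, hD_lt⟩ := GroupSeminorm.exists_pos_forall_lt_of_subset_normalClosure hD hε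
  refine ⟨δ, hδ, fun A _ _ _ φ hφr => ?_⟩
  have hℓ := Unitary.isConjInvariant_normSubOne.comp φ
  have hlt := hD_lt _ hℓ hφr
  refine ⟨by simp [hσ_one], fun s hs => ?_, fun s hs t ht => ?_⟩
  · rw [← Unitary.coe_star, Unitary.star_eq_inv, Unitary.norm_coe_sub_coe]
    simpa using hlt _ (Finset.mem_union_left _ (Finset.mem_image_of_mem _ hs))
  · rw [norm_sub_rev, ← Submonoid.coe_mul, Unitary.norm_coe_sub_coe]
    simpa using hlt _ (Finset.mem_union_right _
      (Finset.mem_image_of_mem _ (Finset.mk_mem_product hs ht)))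

lemma Function.exists_rightInverse_comp_eq {ι P E : Type*} {p : E → P}
    (hp : Function.Surjective p) {f : ι → P} (hf : Function.Injective f) {e : ι → E}
    (he : ∀ i, p (e i) = f i) :
    ∃ σ : P → E, Function.RightInverse σ p ∧ ∀ i, σ (f i) = e i := by
  refine ⟨Function.extend f e (Function.surjInv hp), fun x => ?_, hf.extend_apply _ _⟩
  by_cases hx : ∃ i, f i = x
  · obtain ⟨i, rfl⟩ := hx
    rw [hf.extend_apply, he]
  · rw [Function.extend_apply' _ _ _ hx, Function.surjInv_eq hp x]

lemma lift_surfaceRelator {g : ℕ} {G : Type*} [Group G] (f : Fin g × Bool → G) :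
    FreeGroup.lift f (surfaceRelator g) =
      (List.ofFn fun i : Fin g => ⁅f (i, false), f (i, true)⁆).prod := by
  simp [surfaceRelator, map_list_prod, List.map_ofFn, Function.comp_def, map_commutatorElement]

namespace SurfaceGroup

noncomputable def toFinsupp (g : ℕ) : SurfaceGroup g →* Multiplicative (Fin g × Bool →₀ ℤ) :=
  PresentedGroup.toGroup (f := fun p => Multiplicative.ofAdd (Finsupp.single p 1)) <| by
    rintro r rfl
    rw [lift_surfaceRelator]
    exact List.prod_eq_one fun x hx => by
      obtain ⟨i, rfl⟩ := List.mem_ofFn.1 hx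
      exact commutatorElement_eq_one_iff_mul_comm.2 (mul_comm _ _)

lemma toFinsupp_of {g : ℕ} (p : Fin g × Bool) :
    toFinsupp g (PresentedGroup.of p) = Multiplicative.ofAdd (Finsupp.single p 1) :=
  PresentedGroup.toGroup.of _

lemma injective_elim_of (g : ℕ) :
    Function.Injective fun o : Option (Fin g × Bool) =>
      o.elim (1 : SurfaceGroup g) PresentedGroup.of := by
  refine Function.Injective.of_comp (f := fun x => (toFinsupp g x).toAdd) ?_
  rintro (_ | p) (_ | q) h <;> dsimp only [Function.comp_apply, Option.elim] at h <;>
    simp [toFinsupp_of, Finsupp.single_left_inj, eq_comm (a := (0 : Fin g × Bool →₀ ℤ))] at h ⊢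
  exact h

end SurfaceGroup

theorem statement0_general (g : ℕ) (ε : ℝ) (hε : 0 < ε)
    (F : Finset (SurfaceGroup g)) :
    ∃ δ > (0 : ℝ),
      ∀ (A : Type*) [NormedRing A] [StarRing A] [CStarRing A] [NormedAlgebra ℂ A]
        [CompleteSpace A] [StarModule ℂ A],
        ∀ u v : Fin g → unitary A,
          ‖(((List.ofFn fun i : Fin g => ⁅u i, v i⁆).prod : unitary A) : A) - 1‖ < δ →
          ∃ π : SurfaceGroup g → unitary A,
            IsQuasiRep (↑F) ε π ∧
            (∀ i : Fin g, π (sgA i) = u i) ∧ (∀ i : Fin g, π (sgB i) = v i) := by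
  obtain ⟨σ, hσ, hσ_elim⟩ := Function.exists_rightInverse_comp_eq
    (PresentedGroup.mk_surjective _) (SurfaceGroup.injective_elim_of g)
    (e := fun o => o.elim 1 FreeGroup.of) (by rintro (_ | p) <;> rfl)
  obtain ⟨δ, hδ, hπ⟩ := exists_pos_isQuasiRep_comp_of_rightInverse σ hσ (hσ_elim none) F hε
  refine ⟨δ, hδ, fun A _ _ _ _ _ _ u v huv => ?_⟩
  let φ := FreeGroup.lift fun p : Fin g × Bool => cond p.2 (v p.1) (u p.1)
  refine ⟨φ ∘ σ, hπ A φ ?_, fun i => ?_, fun i => ?_⟩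
  · rwa [lift_surfaceRelator]
  · have hσA : σ (sgA i) = FreeGroup.of (i, false) := hσ_elim (some (i, false))
    exact (congrArg φ hσA).trans (by simp [φ])
  · have hσB : σ (sgB i) = FreeGroup.of (i, true) := hσ_elim (some (i, true))
    exact (congrArg φ hσB).trans (by simp [φ])

/-- For every `ε > 0` and finite `F ⊆ Γ_g` there is `δ > 0` such that whenever unitaries
`u₁, v₁, …, u_g, v_g` in a unital C*-algebra `A` satisfy `‖∏ᵢ [uᵢ, vᵢ] - 1‖ < δ`,
there is an `(F, ε)`-representation `π : Γ_g → U(A)` with `π(αᵢ) = uᵢ`, `π(βᵢ) = vᵢ`. -/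
theorem statement0 (g : ℕ) (hg : 1 ≤ g) (ε : ℝ) (hε : 0 < ε)
    (F : Finset (SurfaceGroup g)) :
    ∃ δ > (0 : ℝ),
      ∀ (A : Type*) [NormedRing A] [StarRing A] [CStarRing A] [NormedAlgebra ℂ A]
        [CompleteSpace A] [StarModule ℂ A],
        ∀ u v : Fin g → unitary A,
          ‖(((List.ofFn fun i : Fin g => ⁅u i, v i⁆).prod : unitary A) : A) - 1‖ < δ →
          ∃ π : SurfaceGroup g → unitary A,
            IsQuasiRep (↑F) ε π ∧
            (∀ i : Fin g, π (sgA i) = u i) ∧ (∀ i : Fin g, π (sgB i) = v i) :=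
  statement0_general g ε hε F
end

section
/- Let g ≥ 1 and let q : F_{2g} → Γ_g be the canonical quotient homomorphism from the free group F_{2g} on generators α̂_1, β̂_1, …, α̂_g, β̂_g onto the surface group Γ_g, sending α̂_k to α_k and β̂_k to β_k. There exists a set-theoretic section s : Γ_g → F_{2g} of q with s(1) = 1, s(α_k) = α̂_k and s(β_k) = β̂_k for all k, such that for every ε > 0 and every finite subset F ⊆ Γ_g there exists δ > 0 (depending only on g, F and ε, and not on A) with the following property: for every unital C*-algebra A and all unitaries u_1, v_1, …, u_g, v_g ∈ U(A) satisfying ‖∏_{k=1}^g [u_k, v_k] − 1‖ < δ, the composite π = π̂ ∘ s is an (F, ε)-representation of Γ_g in U(A) with π(α_k) = u_k and π(β_k) = v_k for all k, where π̂ : F_{2g} → U(A) is the unique group homomorphism with π̂(α̂_k) = u_k and π̂(β̂_k) = v_k. -/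
open scoped commutatorElement

/-- The canonical quotient homomorphism `q : F_{2g} → Γ_g`. -/
def sgProj (g : ℕ) : FreeGroup (Fin g × Bool) →* SurfaceGroup g :=
  PresentedGroup.mk {surfaceRelator g}

/-- The unique homomorphism `π̂ : F_{2g} → U(A)` with `π̂(α̂ₖ) = uₖ`, `π̂(β̂ₖ) = vₖ`. -/
noncomputable def hatPi {g : ℕ} {A : Type*} [NormedRing A] [StarRing A]
    (u v : Fin g → unitary A) : FreeGroup (Fin g × Bool) →* unitary A :=
  FreeGroup.lift fun p : Fin g × Bool => if p.2 then v p.1 else u p.1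

/-!
Every defect of `π̂ ∘ s` on `F`, namely `π̂(s(x⁻¹) s(x))` or `π̂(s(x) s(y) s(xy)⁻¹)` for `x, y ∈ F`,
is `π̂` applied to an element of `ker q`, the normal closure of the relator `r = ∏ [α̂ᵢ, β̂ᵢ]`,
i.e. to a finite product of conjugates of `r^{±1}`. For unitaries,
`‖uv - 1‖ ≤ ‖u - 1‖ + ‖v - 1‖` and `‖c u c⁻¹ - 1‖ = ‖u⁻¹ - 1‖ = ‖u - 1‖`, so each of the
finitely many defects `w` satisfies `‖π̂(w) - 1‖ ≤ n ‖π̂(r) - 1‖` with `n` depending on the word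
only, never on `A` or `π̂`; then `δ = ε / (n + 1)` works. The section can send the generators to
the free generators because these are distinct and nontrivial in `Γ_g`, as their images in the
abelianization `ℤ^{2g}` show.
-/

section UnitaryNorm

variable {A : Type*} [NormedRing A] [StarRing A] [CStarRing A]

namespace Unitary

lemma norm_coe_mul_sub_one_le (x y : unitary A) :
    ‖((x * y : unitary A) : A) - 1‖ ≤ ‖(x : A) - 1‖ + ‖(y : A) - 1‖ := by
  have : ((x * y : unitary A) : A) - 1 = ((x : A) - 1) * y + ((y : A) - 1) := by
    push_cast; noncomm_ring
  rw [this, ← CStarRing.norm_mul_coe_unitary ((x : A) - 1) y]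
  exact norm_add_le _ _

lemma norm_coe_inv_sub_one (x : unitary A) : ‖((x⁻¹ : unitary A) : A) - 1‖ = ‖(x : A) - 1‖ := by
  rw [← Unitary.star_eq_inv, Unitary.coe_star, ← norm_star, star_sub, star_star, star_one]

lemma norm_coe_conj_sub_one (c x : unitary A) :
    ‖((c * x * c⁻¹ : unitary A) : A) - 1‖ = ‖(x : A) - 1‖ := by
  have : ((c * x * c⁻¹ : unitary A) : A) - 1 = c * (((x : A) - 1) * ((c⁻¹ : unitary A) : A)) := by
    rw [← Unitary.star_eq_inv, sub_mul, mul_sub, one_mul, ← mul_assoc, Unitary.coe_mul_star_self]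
    simp
  rw [this, CStarRing.norm_coe_unitary_mul, CStarRing.norm_mul_coe_unitary]

lemma norm_coe_mul_inv_sub_one (x y : unitary A) :
    ‖((x * y⁻¹ : unitary A) : A) - 1‖ = ‖(x : A) - y‖ := by
  rw [← CStarRing.norm_mul_coe_unitary _ y, sub_mul, one_mul, ← MulMemClass.coe_mul,
    inv_mul_cancel_right]

end Unitary

end UnitaryNorm

section NormalClosure

variable {G : Type*} [Group G] {r : G}

theorem exists_norm_sub_one_le_of_mem_normalClosure {w : G}
    (hw : w ∈ Subgroup.normalClosure {r}) :
    ∃ n : ℕ, ∀ (A : Type*) [NormedRing A] [StarRing A] [CStarRing A] (φ : G →* unitary A),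
      ‖(φ w : A) - 1‖ ≤ n * ‖(φ r : A) - 1‖ := by
  induction hw using Subgroup.closure_induction with
  | mem x hx =>
    obtain ⟨_, rfl, hconj⟩ := Group.mem_conjugatesOfSet_iff.mp hx
    obtain ⟨c, rfl⟩ := isConj_iff.mp hconj
    refine ⟨1, fun A _ _ _ φ => ?_⟩
    rw [map_mul, map_mul, map_inv, Unitary.norm_coe_conj_sub_one, Nat.cast_one, one_mul]
  | one => exact ⟨0, fun A _ _ _ φ => by simp⟩
  | mul x y _ _ hx hy =>
    obtain ⟨m, hm⟩ := hx
    obtain ⟨n, hn⟩ := hy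
    refine ⟨m + n, fun A _ _ _ φ => ?_⟩
    rw [map_mul, Nat.cast_add, add_mul]
    exact (Unitary.norm_coe_mul_sub_one_le _ _).trans (add_le_add (hm A φ) (hn A φ))
  | inv x _ hx =>
    obtain ⟨n, hn⟩ := hx
    exact ⟨n, fun A _ _ _ φ => by rw [map_inv, Unitary.norm_coe_inv_sub_one]; exact hn A φ⟩

theorem exists_forall_norm_sub_one_le_of_subset_normalClosure {D : Finset G}
    (hD : ↑D ⊆ (Subgroup.normalClosure {r} : Set G)) :
    ∃ n : ℕ, ∀ w ∈ D, ∀ (A : Type*) [NormedRing A] [StarRing A] [CStarRing A]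
      (φ : G →* unitary A), ‖(φ w : A) - 1‖ ≤ n * ‖(φ r : A) - 1‖ := by
  refine ((Filter.eventually_all_finset D).2 fun w hw => ?_).exists (f := Filter.atTop)
  obtain ⟨n, hn⟩ := exists_norm_sub_one_le_of_mem_normalClosure (hD hw)
  filter_upwards [Filter.eventually_ge_atTop n] with m hm A _ _ _ φ
  exact (hn A φ).trans (by gcongr)

end NormalClosure

theorem exists_isQuasiRep_comp_section {H G : Type*} [Group H] [Group G] {q : H →* G} {r : H}
    (hker : q.ker ≤ Subgroup.normalClosure {r}) {s : G → H} (hs : ∀ x, q (s x) = x)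
    (hs1 : s 1 = 1) {ε : ℝ} (hε : 0 < ε) (F : Finset G) :
    ∃ δ > (0 : ℝ), ∀ (A : Type*) [NormedRing A] [StarRing A] [CStarRing A] (φ : H →* unitary A),
      ‖(φ r : A) - 1‖ < δ → IsQuasiRep (↑F) ε (fun x => φ (s x)) := by
  classical
  set D : Finset H := F.image (fun x => s x⁻¹ * s x) ∪
    (F ×ˢ F).image (fun p => s p.1 * s p.2 * (s (p.1 * p.2))⁻¹) with hD
  have hDker : ↑D ⊆ (Subgroup.normalClosure {r} : Set H) := by
    intro d hd
    apply hker
    simp only [hD, Finset.coe_union, Finset.coe_image, Finset.coe_product, Set.mem_union,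
      Set.mem_image] at hd
    rcases hd with ⟨x, _, rfl⟩ | ⟨⟨x, y⟩, _, rfl⟩ <;> simp [hs]
  obtain ⟨n, hn⟩ := exists_forall_norm_sub_one_le_of_subset_normalClosure hDker
  refine ⟨ε / (n + 1), by positivity, fun A _ _ _ φ hr => ?_⟩
  have hsmall : ∀ d ∈ D, ‖(φ d : A) - 1‖ < ε := fun d hd =>
    calc ‖(φ d : A) - 1‖ ≤ n * ‖(φ r : A) - 1‖ := hn d hd A φ
      _ ≤ n * (ε / (n + 1)) := by gcongr
      _ < ε := by
        rw [mul_div_assoc', div_lt_iff₀ (by positivity)]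
        nlinarith
  refine ⟨by simp [hs1], fun x hx => ?_, fun x hx y hy => ?_⟩
  · have := hsmall _ (Finset.mem_union_left _ (Finset.mem_image_of_mem _ hx))
    rwa [map_mul, ← inv_inv (φ (s x)), Unitary.norm_coe_mul_inv_sub_one,
      ← Unitary.star_eq_inv, Unitary.coe_star] at this
  · have := hsmall _ (Finset.mem_union_right _
      (Finset.mem_image_of_mem _ (Finset.mk_mem_product hx hy)))
    rwa [map_mul, map_inv, Unitary.norm_coe_mul_inv_sub_one, map_mul, norm_sub_rev] at this

theorem exists_section_map_one_of_injective {M N ι : Type*} [MulOneClass M] [MulOneClass N]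
    {q : M →* N} (hq : Function.Surjective q) {e : ι → M} (he : Function.Injective (q ∘ e))
    (he1 : ∀ i, q (e i) ≠ 1) :
    ∃ s : N → M, (∀ x, q (s x) = x) ∧ s 1 = 1 ∧ ∀ i, s (q (e i)) = e i := by
  classical
  set s₀ : N → M := Function.update (Function.surjInv hq) 1 1 with hs₀_def
  have hs₀ : ∀ x, q (s₀ x) = x := by
    intro x
    rcases eq_or_ne x 1 with rfl | hx
    · simp [hs₀_def]
    · simp [hs₀_def, hx, Function.surjInv_eq hq]
  refine ⟨Function.extend (q ∘ e) e s₀, fun x => ?_, ?_, he.extend_apply e s₀⟩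
  · by_cases hx : ∃ i, (q ∘ e) i = x
    · obtain ⟨i, rfl⟩ := hx
      rw [he.extend_apply, Function.comp_apply]
    · rw [Function.extend_apply' _ _ _ hx, hs₀]
  · rw [Function.extend_apply' (f := q ∘ e) _ _ _ fun ⟨i, hi⟩ => he1 i hi]
    simp [hs₀_def]

noncomputable def sgToFinsupp (g : ℕ) : SurfaceGroup g →* Multiplicative (Fin g × Bool →₀ ℤ) :=
  PresentedGroup.toGroup (f := fun p => Multiplicative.ofAdd (Finsupp.single p 1)) <| by
    rintro r rfl
    rw [surfaceRelator, map_list_prod, List.map_ofFn]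
    refine List.prod_eq_one fun x hx => ?_
    obtain ⟨i, rfl⟩ := List.mem_ofFn.mp hx
    rw [Function.comp_apply, map_commutatorElement]
    exact commutatorElement_eq_one_iff_commute.mpr (Commute.all _ _)

lemma sgToFinsupp_sgProj_of {g : ℕ} (p : Fin g × Bool) :
    sgToFinsupp g (sgProj g (FreeGroup.of p)) = Multiplicative.ofAdd (Finsupp.single p 1) :=
  PresentedGroup.toGroup.of _

lemma sgProj_of_injective (g : ℕ) : Function.Injective (sgProj g ∘ FreeGroup.of) := by
  refine .of_comp (f := sgToFinsupp g) fun p p' h => ?_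
  simp only [Function.comp_apply, sgToFinsupp_sgProj_of] at h
  exact Finsupp.single_left_injective one_ne_zero (Multiplicative.ofAdd.injective h)

lemma sgProj_of_ne_one {g : ℕ} (p : Fin g × Bool) : sgProj g (FreeGroup.of p) ≠ 1 := by
  intro h
  have := congrArg (sgToFinsupp g) h
  rw [sgToFinsupp_sgProj_of, map_one] at this
  exact one_ne_zero (Finsupp.single_eq_zero.mp (Multiplicative.ofAdd.injective this))

lemma sgProj_ker_le (g : ℕ) : (sgProj g).ker ≤ Subgroup.normalClosure {surfaceRelator g} :=
  fun _ => PresentedGroup.mk_eq_one_iff.mp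

lemma hatPi_surfaceRelator {g : ℕ} {A : Type*} [NormedRing A] [StarRing A]
    (u v : Fin g → unitary A) :
    hatPi u v (surfaceRelator g) = (List.ofFn fun i : Fin g => ⁅u i, v i⁆).prod := by
  simp [surfaceRelator, hatPi, map_list_prod, List.map_ofFn, Function.comp_def]

theorem statement1_general (g : ℕ) :
    ∃ s : SurfaceGroup g → FreeGroup (Fin g × Bool),
      (∀ x : SurfaceGroup g, sgProj g (s x) = x) ∧
      s 1 = 1 ∧
      (∀ k : Fin g, s (sgA k) = FreeGroup.of ((k, false) : Fin g × Bool)) ∧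
      (∀ k : Fin g, s (sgB k) = FreeGroup.of ((k, true) : Fin g × Bool)) ∧
      (∀ ε : ℝ, 0 < ε → ∀ F : Finset (SurfaceGroup g),
        ∃ δ > (0 : ℝ),
          ∀ (A : Type*) [NormedRing A] [StarRing A] [CStarRing A] [NormedAlgebra ℂ A]
            [CompleteSpace A] [StarModule ℂ A],
            ∀ u v : Fin g → unitary A,
              ‖(((List.ofFn fun i : Fin g => ⁅u i, v i⁆).prod : unitary A) : A) - 1‖ < δ →
              (IsQuasiRep (↑F) ε (fun x => hatPi u v (s x)) ∧
               (∀ k : Fin g, hatPi u v (s (sgA k)) = u k) ∧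
               (∀ k : Fin g, hatPi u v (s (sgB k)) = v k))) := by
  obtain ⟨s, hs, hs1, hs_of⟩ := exists_section_map_one_of_injective
    (PresentedGroup.mk_surjective _) (sgProj_of_injective g) sgProj_of_ne_one
  have hsA (k : Fin g) : s (sgA k) = FreeGroup.of (k, false) := hs_of (k, false)
  have hsB (k : Fin g) : s (sgB k) = FreeGroup.of (k, true) := hs_of (k, true)
  refine ⟨s, hs, hs1, hsA, hsB, fun ε hε F => ?_⟩
  obtain ⟨δ, hδ, hrep⟩ := exists_isQuasiRep_comp_section (sgProj_ker_le g) hs hs1 hε F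
  refine ⟨δ, hδ, fun A _ _ _ _ _ _ u v hu => ⟨?_, fun k => ?_, fun k => ?_⟩⟩
  · exact hrep A (hatPi u v) (by rwa [hatPi_surfaceRelator])
  · simp [hsA, hatPi]
  · simp [hsB, hatPi]

/-- There is a section `s : Γ_g → F_{2g}` of `q` with `s(1) = 1`, `s(αₖ) = α̂ₖ`, `s(βₖ) = β̂ₖ`,
such that for every `ε > 0` and finite `F ⊆ Γ_g` there is `δ > 0`, independent of `A`, with:
for all unitaries `u₁, v₁, …, u_g, v_g` in a unital C*-algebra `A` with
`‖∏ₖ [uₖ, vₖ] - 1‖ < δ`, the map `π = π̂ ∘ s` is an `(F, ε)`-representation with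
`π(αₖ) = uₖ` and `π(βₖ) = vₖ`. -/
theorem statement1 (g : ℕ) (hg : 1 ≤ g) :
    ∃ s : SurfaceGroup g → FreeGroup (Fin g × Bool),
      (∀ x : SurfaceGroup g, sgProj g (s x) = x) ∧
      s 1 = 1 ∧
      (∀ k : Fin g, s (sgA k) = FreeGroup.of ((k, false) : Fin g × Bool)) ∧
      (∀ k : Fin g, s (sgB k) = FreeGroup.of ((k, true) : Fin g × Bool)) ∧
      (∀ ε : ℝ, 0 < ε → ∀ F : Finset (SurfaceGroup g),
        ∃ δ > (0 : ℝ),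
          ∀ (A : Type*) [NormedRing A] [StarRing A] [CStarRing A] [NormedAlgebra ℂ A]
            [CompleteSpace A] [StarModule ℂ A],
            ∀ u v : Fin g → unitary A,
              ‖(((List.ofFn fun i : Fin g => ⁅u i, v i⁆).prod : unitary A) : A) - 1‖ < δ →
              (IsQuasiRep (↑F) ε (fun x => hatPi u v (s x)) ∧
               (∀ k : Fin g, hatPi u v (s (sgA k)) = u k) ∧
               (∀ k : Fin g, hatPi u v (s (sgB k)) = v k))) :=
  statement1_general g
end

section
/- Let A be a unital complex Banach algebra and τ a trace on A. Let ξ₁, ξ₂ : [t₁, t₂] → A be continuously differentiable paths all of whose values are invertible, and let ξ(t) = ξ₁(t)ξ₂(t) be their pointwise product. Then Δ̃_τ(ξ) = Δ̃_τ(ξ₁) + Δ̃_τ(ξ₂), i.e. ∫_{t₁}^{t₂} τ(ξ′(t)ξ(t)⁻¹) dt = ∫_{t₁}^{t₂} τ(ξ₁′(t)ξ₁(t)⁻¹) dt + ∫_{t₁}^{t₂} τ(ξ₂′(t)ξ₂(t)⁻¹) dt. -/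
/-! By the Leibniz rule, `(ξ₁ξ₂)′(ξ₁ξ₂)⁻¹ = ξ₁′ξ₁⁻¹ + ξ₁(ξ₂′ξ₂⁻¹)ξ₁⁻¹`, and a trace does not see the
conjugation by `ξ₁`; so the integrands agree pointwise and the integrals add up. -/

open scoped Real

noncomputable def dhsDet {A : Type*} [NormedRing A] [NormedAlgebra ℂ A] [CompleteSpace A]
    (τ : A →L[ℂ] ℂ) (t₁ t₂ : ℝ) (ξ ξ' : ℝ → A) : ℂ :=
  (2 * (Real.pi : ℂ) * Complex.I)⁻¹ * ∫ t in t₁..t₂, τ (ξ' t * Ring.inverse (ξ t))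

open Set

theorem map_mul_add_mul_mul_inverse {R M F : Type*} [Semiring R] [AddCommMonoid M]
    [FunLike F R M] [AddMonoidHomClass F R M] (τ : F) (hτ : ∀ a b : R, τ (a * b) = τ (b * a))
    {x y : R} (hx : IsUnit x) (hy : IsUnit y) (a b : R) :
    τ ((a * y + x * b) * Ring.inverse (x * y)) = τ (a * Ring.inverse x) + τ (b * Ring.inverse y) := by
  obtain ⟨u, rfl⟩ := hx
  obtain ⟨v, rfl⟩ := hy
  rw [← Units.val_mul, Ring.inverse_unit, Ring.inverse_unit, Ring.inverse_unit, mul_inv_rev,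
    Units.val_mul, add_mul, map_add]
  congr 1
  · rw [mul_assoc, v.mul_inv_cancel_left]
  · rw [mul_assoc, hτ, mul_assoc, mul_assoc, u.inv_mul, mul_one]

theorem ContinuousOn.ring_inverse {X R : Type*} [TopologicalSpace X] [NormedRing R]
    [HasSummableGeomSeries R] {f : X → R} {s : Set X} (hf : ContinuousOn f s)
    (hu : ∀ x ∈ s, IsUnit (f x)) : ContinuousOn (fun x ↦ Ring.inverse (f x)) s := by
  intro x hx
  obtain ⟨u, hu⟩ := hu x hx
  exact (hu ▸ NormedRing.inverse_continuousAt u).comp_continuousWithinAt (hf x hx)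

theorem intervalIntegrable_map_mul_ring_inverse {R E : Type*} [NormedRing R]
    [HasSummableGeomSeries R] [NormedAddCommGroup E] {τ : R → E} (hτ : Continuous τ)
    {a b : ℝ} (hab : a ≤ b) {f f' : ℝ → R} (hf : ContinuousOn f (Icc a b))
    (hf' : ContinuousOn f' (Icc a b)) (hu : ∀ t ∈ Icc a b, IsUnit (f t)) :
    IntervalIntegrable (fun t ↦ τ (f' t * Ring.inverse (f t))) MeasureTheory.volume a b :=
  (hτ.comp_continuousOn (hf'.mul (hf.ring_inverse hu))).intervalIntegrable_of_Icc hab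

theorem statement2_general {A : Type*} [NormedRing A] [NormedAlgebra ℂ A] [CompleteSpace A]
    (τ : A →L[ℂ] ℂ) (hτ : ∀ a b : A, τ (a * b) = τ (b * a))
    (t₁ t₂ : ℝ) (ht : t₁ ≤ t₂)
    (ξ₁ ξ₂ ξ ξ₁' ξ₂' ξ' : ℝ → A)
    (hmul : ∀ t ∈ Set.Icc t₁ t₂, ξ t = ξ₁ t * ξ₂ t)
    (hd₁ : ∀ t ∈ Set.Icc t₁ t₂, HasDerivWithinAt ξ₁ (ξ₁' t) (Set.Icc t₁ t₂) t)
    (hd₂ : ∀ t ∈ Set.Icc t₁ t₂, HasDerivWithinAt ξ₂ (ξ₂' t) (Set.Icc t₁ t₂) t)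
    (hd : ∀ t ∈ Set.Icc t₁ t₂, HasDerivWithinAt ξ (ξ' t) (Set.Icc t₁ t₂) t)
    (hc₁ : ContinuousOn ξ₁' (Set.Icc t₁ t₂))
    (hc₂ : ContinuousOn ξ₂' (Set.Icc t₁ t₂))
    (hinv₁ : ∀ t ∈ Set.Icc t₁ t₂, IsUnit (ξ₁ t))
    (hinv₂ : ∀ t ∈ Set.Icc t₁ t₂, IsUnit (ξ₂ t)) :
    dhsDet τ t₁ t₂ ξ ξ' = dhsDet τ t₁ t₂ ξ₁ ξ₁' + dhsDet τ t₁ t₂ ξ₂ ξ₂' ∧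
    (∫ t in t₁..t₂, τ (ξ' t * Ring.inverse (ξ t))) =
      (∫ t in t₁..t₂, τ (ξ₁' t * Ring.inverse (ξ₁ t))) +
      (∫ t in t₁..t₂, τ (ξ₂' t * Ring.inverse (ξ₂ t))) := by
  have integral_eq : (∫ t in t₁..t₂, τ (ξ' t * Ring.inverse (ξ t))) =
      (∫ t in t₁..t₂, τ (ξ₁' t * Ring.inverse (ξ₁ t))) +
      (∫ t in t₁..t₂, τ (ξ₂' t * Ring.inverse (ξ₂ t))) := by
    rcases ht.eq_or_lt with rfl | hlt
    · simp
    rw [← intervalIntegral.integral_add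
      (intervalIntegrable_map_mul_ring_inverse τ.continuous ht
        (fun t ht ↦ (hd₁ t ht).continuousWithinAt) hc₁ hinv₁)
      (intervalIntegrable_map_mul_ring_inverse τ.continuous ht
        (fun t ht ↦ (hd₂ t ht).continuousWithinAt) hc₂ hinv₂)]
    refine intervalIntegral.integral_congr fun t htI ↦ ?_
    rw [uIcc_of_le ht] at htI
    have leibniz : ξ' t = ξ₁' t * ξ₂ t + ξ₁ t * ξ₂' t :=
      (uniqueDiffOn_Icc hlt t htI).eq_deriv _ (hd t htI)
        (((hd₁ t htI).mul (hd₂ t htI)).congr hmul (hmul t htI))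
    simp only [leibniz, hmul t htI,
      map_mul_add_mul_mul_inverse τ hτ (hinv₁ t htI) (hinv₂ t htI)]
  exact ⟨by simp only [dhsDet, integral_eq, mul_add], integral_eq⟩

/-- If `ξ = ξ₁ ξ₂` is the pointwise product of two continuously differentiable
invertible-valued paths, then `Δ̃_τ(ξ) = Δ̃_τ(ξ₁) + Δ̃_τ(ξ₂)`, i.e.
`∫ τ(ξ′ ξ⁻¹) = ∫ τ(ξ₁′ ξ₁⁻¹) + ∫ τ(ξ₂′ ξ₂⁻¹)`. -/
theorem statement2 {A : Type*} [NormedRing A] [NormedAlgebra ℂ A] [CompleteSpace A]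
    (τ : A →L[ℂ] ℂ) (hτ : ∀ a b : A, τ (a * b) = τ (b * a))
    (t₁ t₂ : ℝ) (ht : t₁ ≤ t₂)
    (ξ₁ ξ₂ ξ ξ₁' ξ₂' ξ' : ℝ → A)
    (hmul : ∀ t ∈ Set.Icc t₁ t₂, ξ t = ξ₁ t * ξ₂ t)
    (hd₁ : ∀ t ∈ Set.Icc t₁ t₂, HasDerivWithinAt ξ₁ (ξ₁' t) (Set.Icc t₁ t₂) t)
    (hd₂ : ∀ t ∈ Set.Icc t₁ t₂, HasDerivWithinAt ξ₂ (ξ₂' t) (Set.Icc t₁ t₂) t)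
    (hd : ∀ t ∈ Set.Icc t₁ t₂, HasDerivWithinAt ξ (ξ' t) (Set.Icc t₁ t₂) t)
    (hc₁ : ContinuousOn ξ₁' (Set.Icc t₁ t₂))
    (hc₂ : ContinuousOn ξ₂' (Set.Icc t₁ t₂))
    (hc : ContinuousOn ξ' (Set.Icc t₁ t₂))
    (hinv₁ : ∀ t ∈ Set.Icc t₁ t₂, IsUnit (ξ₁ t))
    (hinv₂ : ∀ t ∈ Set.Icc t₁ t₂, IsUnit (ξ₂ t)) :
    dhsDet τ t₁ t₂ ξ ξ' = dhsDet τ t₁ t₂ ξ₁ ξ₁' + dhsDet τ t₁ t₂ ξ₂ ξ₂' ∧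
    (∫ t in t₁..t₂, τ (ξ' t * Ring.inverse (ξ t))) =
      (∫ t in t₁..t₂, τ (ξ₁' t * Ring.inverse (ξ₁ t))) +
      (∫ t in t₁..t₂, τ (ξ₂' t * Ring.inverse (ξ₂ t))) :=
  statement2_general τ hτ t₁ t₂ ht ξ₁ ξ₂ ξ ξ₁' ξ₂' ξ' hmul hd₁ hd₂ hd hc₁ hc₂ hinv₁ hinv₂
end

section
/- Let A be a unital complex Banach algebra and τ a trace on A. Let H : [0,1] × [t₁, t₂] → A be a twice continuously differentiable map with H(s,t) invertible for all (s,t), and suppose the endpoints are fixed: H(s, t₁) = H(0, t₁) and H(s, t₂) = H(0, t₂) for all s ∈ [0,1]. Then Δ̃_τ(H(0, ·)) = Δ̃_τ(H(1, ·)); that is, the de la Harpe–Skandalis determinant of a path of invertibles is invariant under fixed-endpoint smooth homotopies. -/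
open Set MeasureTheory

section TraceLogDeriv

variable {E A F : Type*} [NormedAddCommGroup E] [NormedSpace ℝ E] [NormedRing A]
  [NormedAlgebra ℝ A] [CompleteSpace A] [NormedAddCommGroup F] [NormedSpace ℝ F]
  {G : E → A} {s : Set E} {x : E}

theorem fderivWithin_ringInverse_comp_apply (hs : UniqueDiffWithinAt ℝ s x)
    (hG : DifferentiableWithinAt ℝ G s x) (hx : IsUnit (G x)) (v : E) :
    fderivWithin ℝ (fun p => Ring.inverse (G p)) s x v =
      -(Ring.inverse (G x) * fderivWithin ℝ G s x v * Ring.inverse (G x)) := by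
  obtain ⟨u, hu⟩ := hx
  have hinv := hasFDerivAt_ringInverse (𝕜 := ℝ) u
  rw [← Ring.inverse_unit, hu] at hinv
  rw [HasFDerivWithinAt.fderivWithin (f := fun p => Ring.inverse (G p))
    (hinv.comp_hasFDerivWithinAt x hG.hasFDerivWithinAt) hs]
  simp [mul_assoc]

/-- The 1-form `τ(dG · G⁻¹)`: integrated along a path of invertibles it gives `2πi` times the
de la Harpe–Skandalis determinant. -/
noncomputable def traceLogDeriv (τ : A →L[ℝ] F) (G : E → A) (s : Set E) (u p : E) : F :=
  τ (fderivWithin ℝ G s p u * Ring.inverse (G p))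

variable (τ : A →L[ℝ] F) (u : E)

theorem differentiableWithinAt_traceLogDeriv (hG : ContDiffWithinAt ℝ 2 G s x)
    (hs : UniqueDiffOn ℝ s) (hx : x ∈ s) (hunit : IsUnit (G x)) :
    DifferentiableWithinAt ℝ (traceLogDeriv τ G s u) s x := by
  have hDG : DifferentiableWithinAt ℝ (fderivWithin ℝ G s) s x :=
    (hG.fderivWithin_right hs (by norm_num) hx).differentiableWithinAt one_ne_zero
  exact τ.differentiableAt.comp_differentiableWithinAt x
    ((hDG.clm_apply (differentiableWithinAt_const u)).mul
      ((hG.differentiableWithinAt two_ne_zero).inverse hunit))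

theorem fderivWithin_traceLogDeriv_apply (hG : ContDiffWithinAt ℝ 2 G s x)
    (hs : UniqueDiffOn ℝ s) (hx : x ∈ s) (hunit : IsUnit (G x)) (v : E) :
    fderivWithin ℝ (traceLogDeriv τ G s u) s x v =
      τ (fderivWithin ℝ (fderivWithin ℝ G s) s x v u * Ring.inverse (G x)) -
        τ (fderivWithin ℝ G s x u * Ring.inverse (G x) *
          (fderivWithin ℝ G s x v * Ring.inverse (G x))) := by
  have hDG : DifferentiableWithinAt ℝ (fderivWithin ℝ G s) s x :=
    (hG.fderivWithin_right hs (by norm_num) hx).differentiableWithinAt one_ne_zero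
  have hDGu := hDG.clm_apply (differentiableWithinAt_const u)
  have hGinv := (hG.differentiableWithinAt two_ne_zero).inverse hunit
  rw [HasFDerivWithinAt.fderivWithin (f := traceLogDeriv τ G s u)
    (τ.hasFDerivAt.comp_hasFDerivWithinAt x (hDGu.mul hGinv).hasFDerivWithinAt) (hs x hx)]
  rw [ContinuousLinearMap.comp_apply, fderivWithin_mul' (hs x hx) hDGu hGinv,
    fderivWithin_clm_apply (hs x hx) hDG (differentiableWithinAt_const u)]
  simp only [fderivWithin_fun_const, Pi.zero_apply, ContinuousLinearMap.comp_zero, zero_add,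
    add_apply, smul_apply, ContinuousLinearMap.flip_apply,
    fderivWithin_ringInverse_comp_apply (hs x hx) (hG.differentiableWithinAt two_ne_zero) hunit,
    smul_eq_mul, MulOpposite.smul_eq_mul_unop, MulOpposite.unop_op, mul_neg, mul_assoc, map_add,
    map_neg, sub_eq_add_neg]
  abel

theorem fderivWithin_traceLogDeriv_comm (hτ : ∀ a b : A, τ (a * b) = τ (b * a))
    (hG : ContDiffWithinAt ℝ 2 G s x) (hs : UniqueDiffOn ℝ s) (hx : x ∈ closure (interior s))
    (h'x : x ∈ s) (hunit : IsUnit (G x)) (v : E) :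
    fderivWithin ℝ (traceLogDeriv τ G s u) s x v =
      fderivWithin ℝ (traceLogDeriv τ G s v) s x u := by
  rw [fderivWithin_traceLogDeriv_apply τ u hG hs h'x hunit,
    fderivWithin_traceLogDeriv_apply τ v hG hs h'x hunit,
    hG.isSymmSndFDerivWithinAt (by simp) hs hx h'x v u, hτ (fderivWithin ℝ G s x u * _)]

end TraceLogDeriv

section Rectangle

variable {F : Type*} [NormedAddCommGroup F] [NormedSpace ℝ F] {H : ℝ × ℝ → F}
  {H' : ℝ × ℝ →L[ℝ] F} {S T : Set ℝ} {a b : ℝ}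

theorem HasFDerivWithinAt.hasDerivWithinAt_comp_prodMk
    (hH : HasFDerivWithinAt H H' (S ×ˢ T) (a, b)) (ha : a ∈ S) :
    HasDerivWithinAt (fun t => H (a, t)) (H' (0, 1)) T b :=
  hH.comp_hasDerivWithinAt b ((hasDerivAt_const b a).prodMk (hasDerivAt_id b)).hasDerivWithinAt
    fun _ ht => mk_mem_prod ha ht

theorem HasFDerivWithinAt.hasDerivWithinAt_comp_prodMk_left
    (hH : HasFDerivWithinAt H H' (S ×ˢ T) (a, b)) (hb : b ∈ T) :
    HasDerivWithinAt (fun s => H (s, b)) (H' (1, 0)) S a :=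
  hH.comp_hasDerivWithinAt a ((hasDerivAt_id a).prodMk (hasDerivAt_const a b)).hasDerivWithinAt
    fun _ hs => mk_mem_prod hs hb

theorem fderivWithin_apply_one_zero_eq_zero_of_eqOn_const
    (hH : DifferentiableWithinAt ℝ H (S ×ˢ T) (a, b)) (hS : UniqueDiffWithinAt ℝ S a)
    (ha : a ∈ S) (hb : b ∈ T) {c : F}
    (hc : ∀ s ∈ S, H (s, b) = c) : fderivWithin ℝ H (S ×ˢ T) (a, b) (1, 0) = 0 := by
  rw [← (hH.hasFDerivWithinAt.hasDerivWithinAt_comp_prodMk_left hb).derivWithin hS,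
    derivWithin_congr hc (hc a ha)]
  simp

theorem integral_boundary_sub_eq_of_fderivWithin_eq {f g : ℝ × ℝ → F} {a₁ b₁ a₂ b₂ : ℝ}
    (h₁ : a₁ ≤ b₁) (h₂ : a₂ ≤ b₂)
    (hf : DifferentiableOn ℝ f (Icc a₁ b₁ ×ˢ Icc a₂ b₂))
    (hg : DifferentiableOn ℝ g (Icc a₁ b₁ ×ˢ Icc a₂ b₂))
    (hfg : ∀ p ∈ Icc a₁ b₁ ×ˢ Icc a₂ b₂, fderivWithin ℝ f (Icc a₁ b₁ ×ˢ Icc a₂ b₂) p (1, 0) =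
      fderivWithin ℝ g (Icc a₁ b₁ ×ˢ Icc a₂ b₂) p (0, 1)) :
    (∫ y in a₂..b₂, f (b₁, y)) - ∫ y in a₂..b₂, f (a₁, y) =
      (∫ x in a₁..b₁, g (x, b₂)) - ∫ x in a₁..b₁, g (x, a₂) := by
  set R := Icc a₁ b₁ ×ˢ Icc a₂ b₂
  have hderiv : ∀ {φ : ℝ × ℝ → F}, DifferentiableOn ℝ φ R →
      ∀ p ∈ Ioo a₁ b₁ ×ˢ Ioo a₂ b₂, HasFDerivAt φ (fderivWithin ℝ φ R p) p := fun hφ p hp =>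
    (hφ p ⟨Ioo_subset_Icc_self hp.1, Ioo_subset_Icc_self hp.2⟩).hasFDerivWithinAt.hasFDerivAt
      (prod_mem_nhds (Icc_mem_nhds hp.1.1 hp.1.2) (Icc_mem_nhds hp.2.1 hp.2.2))
  have hdiv : EqOn (fun p => fderivWithin ℝ f R p (1, 0) + (-fderivWithin ℝ g R p) (0, 1)) 0 R :=
    fun p hp => by simp [hfg p hp]
  have hRIcc : R = Icc (a₁, a₂) (b₁, b₂) := Icc_prod_Icc a₁ b₁ a₂ b₂
  have hR : MeasurableSet R := measurableSet_Icc.prod measurableSet_Icc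
  have hgreen := integral_divergence_prod_Icc_of_hasFDerivAt_of_le f (fun p => -g p)
    (fderivWithin ℝ f R) (fun p => -fderivWithin ℝ g R p) (a₁, a₂) (b₁, b₂) ⟨h₁, h₂⟩
    (hRIcc ▸ hf.continuousOn) (hRIcc ▸ hg.continuousOn.neg) (hderiv hf)
    (fun p hp => (hderiv hg p hp).neg) (hRIcc ▸ integrableOn_zero.congr_fun hdiv.symm hR)
  rw [← hRIcc, setIntegral_congr_fun hR hdiv] at hgreen
  simp only [Pi.zero_apply, integral_zero, intervalIntegral.integral_neg] at hgreen
  rw [← sub_eq_zero, hgreen]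
  abel

end Rectangle

/-- The de la Harpe–Skandalis determinant is invariant under fixed-endpoint (twice
continuously differentiable) homotopies through invertible elements:
`Δ̃_τ(H(0, ·)) = Δ̃_τ(H(1, ·))`. -/
theorem statement4 {A : Type*} [NormedRing A] [NormedAlgebra ℂ A] [CompleteSpace A]
    (τ : A →L[ℂ] ℂ) (hτ : ∀ a b : A, τ (a * b) = τ (b * a))
    (t₁ t₂ : ℝ) (ht : t₁ ≤ t₂) (H : ℝ × ℝ → A)
    (hsmooth : ContDiffOn ℝ 2 H (Set.Icc (0 : ℝ) 1 ×ˢ Set.Icc t₁ t₂))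
    (hinv : ∀ p ∈ Set.Icc (0 : ℝ) 1 ×ˢ Set.Icc t₁ t₂, IsUnit (H p))
    (hend₁ : ∀ s ∈ Set.Icc (0 : ℝ) 1, H (s, t₁) = H (0, t₁))
    (hend₂ : ∀ s ∈ Set.Icc (0 : ℝ) 1, H (s, t₂) = H (0, t₂)) :
    dhsDet τ t₁ t₂ (fun t => H (0, t))
        (fun t => derivWithin (fun t' => H (0, t')) (Set.Icc t₁ t₂) t) =
      dhsDet τ t₁ t₂ (fun t => H (1, t))
        (fun t => derivWithin (fun t' => H (1, t')) (Set.Icc t₁ t₂) t) := by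
  rcases ht.eq_or_lt with rfl | ht
  · simp [dhsDet]
  set R := Icc (0 : ℝ) 1 ×ˢ Icc t₁ t₂
  have hR : UniqueDiffOn ℝ R := (uniqueDiffOn_Icc zero_lt_one).prod (uniqueDiffOn_Icc ht)
  have hRcl : R ⊆ closure (interior R) := by
    rw [interior_prod_eq, closure_prod_eq, interior_Icc, interior_Icc, closure_Ioo zero_ne_one,
      closure_Ioo ht.ne]
  let ω := traceLogDeriv (τ.restrictScalars ℝ) H R
  have hω : ∀ u, DifferentiableOn ℝ (ω u) R := fun u p hp =>
    differentiableWithinAt_traceLogDeriv _ u (hsmooth p hp) hR hp (hinv p hp)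
  have hclosed := integral_boundary_sub_eq_of_fderivWithin_eq zero_le_one ht.le (hω (0, 1))
    (hω (1, 0)) fun p hp =>
      fderivWithin_traceLogDeriv_comm _ _ hτ (hsmooth p hp) hR (hRcl hp) hp (hinv p hp) _
  have hedge : ∀ t ∈ Icc t₁ t₂, (∀ s ∈ Icc (0 : ℝ) 1, H (s, t) = H (0, t)) →
      ∫ s in (0 : ℝ)..1, ω (1, 0) (s, t) = 0 := by
    intro t htt hconst
    refine (intervalIntegral.integral_congr fun s hs => ?_).trans intervalIntegral.integral_zero
    rw [uIcc_of_le zero_le_one] at hs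
    have hpartial : fderivWithin ℝ H R (s, t) (1, 0) = 0 :=
      fderivWithin_apply_one_zero_eq_zero_of_eqOn_const
        (hsmooth.differentiableOn two_ne_zero _ ⟨hs, htt⟩) (uniqueDiffOn_Icc zero_lt_one s hs) hs
        htt hconst
    simp [ω, traceLogDeriv, hpartial]
  have hslice : ∀ s ∈ Icc (0 : ℝ) 1, (∫ t in t₁..t₂,
      τ (derivWithin (fun t' => H (s, t')) (Icc t₁ t₂) t * Ring.inverse (H (s, t)))) =
        ∫ t in t₁..t₂, ω (0, 1) (s, t) := by
    intro s hs
    refine intervalIntegral.integral_congr fun t htt => ?_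
    rw [uIcc_of_le ht.le] at htt
    rw [((hsmooth.differentiableOn two_ne_zero _ ⟨hs, htt⟩).hasFDerivWithinAt
      |>.hasDerivWithinAt_comp_prodMk hs).derivWithin (uniqueDiffOn_Icc ht t htt)]
    rfl
  rw [hedge t₁ (left_mem_Icc.2 ht.le) hend₁, hedge t₂ (right_mem_Icc.2 ht.le) hend₂, sub_self,
    sub_eq_zero] at hclosed
  simp only [dhsDet, hslice 0 (left_mem_Icc.2 zero_le_one), hslice 1 (right_mem_Icc.2 zero_le_one),
    hclosed]
end

section
/- Let A be a unital complex Banach algebra and let a ∈ A satisfy ‖a − a²‖ < 1/4. Then every element λ of the spectrum of a satisfies Re λ ≠ 1/2; in other words, the spectrum of a is disjoint from the vertical line {z ∈ ℂ : Re z = 1/2}. -/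
open Polynomial
open scoped NNReal ENNReal

/-- Unlike `spectralRadius_le_nnnorm`, this needs no `NormOneClass`: the factor `‖1‖` in the
elementary bound `‖k‖ ≤ ‖a‖ * ‖1‖` disappears after passing to `n`-th roots of powers. -/
theorem spectralRadius_le_nnnorm_of_completeSpace {𝕜 A : Type*} [NormedField 𝕜] [NormedRing A]
    [NormedAlgebra 𝕜 A] [CompleteSpace A] (a : A) : spectralRadius 𝕜 a ≤ ‖a‖₊ := by
  refine (spectrum.spectralRadius_le_liminf_pow_nnnorm_pow_one_div 𝕜 a).trans
    (Filter.liminf_le_of_frequently_le' (Filter.Eventually.frequently ?_))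
  filter_upwards [Filter.eventually_ge_atTop 1] with n hn
  have hn' : (n : ℝ) ≠ 0 := by positivity
  calc (‖a ^ n‖₊ : ℝ≥0∞) ^ (1 / n : ℝ)
      ≤ ((‖a‖₊ : ℝ≥0∞) ^ n) ^ (1 / n : ℝ) := by
        gcongr
        exact_mod_cast nnnorm_pow_le' a hn
    _ = ‖a‖₊ := by
        rw [← ENNReal.rpow_natCast, ← ENNReal.rpow_mul, mul_one_div, div_self hn',
          ENNReal.rpow_one]

theorem spectrum.norm_le_norm_of_mem_of_completeSpace {𝕜 A : Type*} [NormedField 𝕜]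
    [NormedRing A] [NormedAlgebra 𝕜 A] [CompleteSpace A] {a : A} {k : 𝕜} (hk : k ∈ spectrum 𝕜 a) :
    ‖k‖ ≤ ‖a‖ := by
  have : (‖k‖₊ : ℝ≥0∞) ≤ ‖a‖₊ :=
    (le_iSup₂ (f := fun k (_ : k ∈ spectrum 𝕜 a) => (‖k‖₊ : ℝ≥0∞)) k hk).trans
      (spectralRadius_le_nnnorm_of_completeSpace a)
  exact_mod_cast this

/-- On the line `Re z = 1/2`, `z - z ^ 2 = 1/4 + (Im z) ^ 2` is real and at least `1/4`. -/
theorem Complex.one_div_four_le_norm_sub_sq {z : ℂ} (hz : z.re = 1 / 2) :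
    1 / 4 ≤ ‖z - z ^ 2‖ :=
  calc (1 / 4 : ℝ) ≤ 1 / 4 + z.im ^ 2 := le_add_of_nonneg_right (sq_nonneg _)
    _ = (z - z ^ 2).re := by simp only [sub_re, sq, mul_re, hz]; ring
    _ ≤ ‖z - z ^ 2‖ := re_le_norm _

/-- If `a` is an element of a unital complex Banach algebra with `‖a - a²‖ < 1/4`, then
the spectrum of `a` is disjoint from the vertical line `{Re z = 1/2}`. -/
theorem statement6 {A : Type*} [NormedRing A] [NormedAlgebra ℂ A] [CompleteSpace A]
    (a : A) (h : ‖a - a ^ 2‖ < 1 / 4) :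
    ∀ z ∈ spectrum ℂ a, z.re ≠ 1 / 2 := by
  intro z hz hre
  have hmem : z - z ^ 2 ∈ spectrum ℂ (a - a ^ 2) := by
    have := spectrum.subset_polynomial_aeval a (X - X ^ 2 : ℂ[X]) (Set.mem_image_of_mem _ hz)
    simpa using this
  linarith [Complex.one_div_four_le_norm_sub_sq hre,
    spectrum.norm_le_norm_of_mem_of_completeSpace hmem]
end

section
/- Let g ≥ 1, let κ_0 = 1 and κ_k = ∏_{j=1}^k [α_j, β_j] ∈ Γ_g for 1 ≤ k ≤ g, and let F₀ ⊆ Γ_g be the finite symmetric set consisting of the elements α_k^{±1}, β_k^{±1}, κ_{k−1}^{±1}, (κ_{k−1}α_k)^{±1}, (κ_{k−1}α_kβ_k)^{±1} and (κ_{k−1}α_kβ_kα_k⁻¹)^{±1} for k = 1, …, g. Then there exists a constant C > 0 depending only on g such that for every unital C*-algebra A, every ε > 0 and every (F₀, ε)-representation π : Γ_g → U(A), one has ‖∏_{k=1}^g [π(α_k), π(β_k)] − 1‖ ≤ C·ε. -/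
open scoped commutatorElement

/-- The partial product of commutators `κ_k = ∏_{j=1}^k [α_j, β_j]` (so `κ_0 = 1`). -/
def sgKappa {g : ℕ} (k : ℕ) : SurfaceGroup g :=
  (((List.ofFn fun j : Fin g => ⁅sgA j, sgB j⁆).take k)).prod

/-- The finite symmetric subset `F₀ ⊆ Γ_g` consisting of
`α_k^{±1}, β_k^{±1}, κ_{k-1}^{±1}, (κ_{k-1} α_k)^{±1}, (κ_{k-1} α_k β_k)^{±1},
(κ_{k-1} α_k β_k α_k⁻¹)^{±1}` for `k = 1, …, g` (here `k : Fin g` is the 0-based index,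
so `sgKappa k.val = κ_{k-1}`). -/
def F0 (g : ℕ) : Set (SurfaceGroup g) :=
  ⋃ k : Fin g,
    {x | x = sgA k ∨ x = (sgA k)⁻¹ ∨ x = sgB k ∨ x = (sgB k)⁻¹ ∨
      x = sgKappa k.val ∨ x = (sgKappa (g := g) k.val)⁻¹ ∨
      x = sgKappa k.val * sgA k ∨ x = (sgKappa k.val * sgA k)⁻¹ ∨
      x = sgKappa k.val * sgA k * sgB k ∨ x = (sgKappa k.val * sgA k * sgB k)⁻¹ ∨
      x = sgKappa k.val * sgA k * sgB k * (sgA k)⁻¹ ∨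
      x = (sgKappa k.val * sgA k * sgB k * (sgA k)⁻¹)⁻¹}

/-!
Write `κ_k = κ_{k-1} α_k β_k α_k⁻¹ β_k⁻¹` and multiply one letter at a time: every intermediate
product is a product of two elements of `F₀`. Each of the four multiplications costs `ε`, and
replacing `π(α_k⁻¹), π(β_k⁻¹)` by `π(α_k)*, π(β_k)*` costs another `ε` each. Multiplication by a
unitary is isometric, so these errors simply add up to
`‖π(κ_g) - ∏_k [π(α_k), π(β_k)]‖ ≤ 6gε`; finally `κ_g = 1` and `π(1) = 1`.
-/

theorem List.prod_take_ofFn_succ {M : Type*} [Monoid M] {n : ℕ} (f : Fin n → M) (k : Fin n) :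
    ((List.ofFn f).take (k + 1)).prod = ((List.ofFn f).take k).prod * f k := by
  rw [List.prod_take_succ _ _ (by simp)]
  simp

namespace IsQuasiRep

variable {G A : Type*} [Group G] [NormedRing A] [StarRing A]
  {F : Set G} {ε : ℝ} {π : G → unitary A}

theorem norm_map_inv_sub_inv_le (hπ : IsQuasiRep F ε π) {s : G} (hs : s ∈ F) :
    ‖(π s⁻¹ : A) - ↑(π s)⁻¹‖ ≤ ε := by
  rw [← Unitary.star_eq_inv, Unitary.coe_star]
  exact (hπ.2.1 s hs).le

variable [CStarRing A]

theorem norm_map_mul_sub_le (hπ : IsQuasiRep F ε π) {s t : G} (hs : s ∈ F) (ht : t ∈ F)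
    {u v : unitary A} {δ η : ℝ} (hu : ‖(π s : A) - u‖ ≤ δ) (hv : ‖(π t : A) - v‖ ≤ η) :
    ‖(π (s * t) : A) - ↑(u * v)‖ ≤ δ + η + ε := by
  have hst := (hπ.2.2 s hs t ht).le
  have split : (π (s * t) : A) - ↑(u * v) =
      ((π (s * t) : A) - π s * π t) + (π s : A) * ((π t : A) - v) + ((π s : A) - u) * v := by
    push_cast
    noncomm_ring
  calc ‖(π (s * t) : A) - ↑(u * v)‖
      ≤ ‖(π (s * t) : A) - π s * π t‖ + ‖(π s : A) * ((π t : A) - v)‖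
          + ‖((π s : A) - u) * v‖ := split ▸ norm_add₃_le
    _ ≤ δ + η + ε := by
      rw [CStarRing.norm_coe_unitary_mul, CStarRing.norm_mul_coe_unitary]
      linarith

theorem norm_map_mul_commutator_sub_le (hπ : IsQuasiRep F ε π) {x a b : G}
    (ha : a ∈ F) (hb : b ∈ F) (ha' : a⁻¹ ∈ F) (hb' : b⁻¹ ∈ F) (hx : x ∈ F) (hxa : x * a ∈ F)
    (hxab : x * a * b ∈ F) (hxaba : x * a * b * a⁻¹ ∈ F) {u : unitary A} {δ : ℝ}
    (hu : ‖(π x : A) - u‖ ≤ δ) :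
    ‖(π (x * a * b * a⁻¹ * b⁻¹) : A) - ↑(u * ⁅π a, π b⁆)‖ ≤ δ + 6 * ε := by
  have h1 := hπ.norm_map_mul_sub_le hx ha hu (v := π a) (η := 0) (by simp)
  have h2 := hπ.norm_map_mul_sub_le hxa hb h1 (v := π b) (η := 0) (by simp)
  have h3 := hπ.norm_map_mul_sub_le hxab ha' h2 (hπ.norm_map_inv_sub_inv_le ha)
  have h4 := hπ.norm_map_mul_sub_le hxaba hb' h3 (hπ.norm_map_inv_sub_inv_le hb)
  rw [commutatorElement_def]
  simp only [mul_assoc] at h4 ⊢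
  linarith

end IsQuasiRep

namespace SurfaceGroup

theorem sgKappa_zero {g : ℕ} : (sgKappa 0 : SurfaceGroup g) = 1 := by
  simp [sgKappa]

theorem sgKappa_succ {g : ℕ} (k : Fin g) :
    (sgKappa (k + 1) : SurfaceGroup g) = sgKappa k * sgA k * sgB k * (sgA k)⁻¹ * (sgB k)⁻¹ := by
  rw [sgKappa, List.prod_take_ofFn_succ, commutatorElement_def]
  simp only [sgKappa, mul_assoc]

theorem sgKappa_self (g : ℕ) : (sgKappa g : SurfaceGroup g) = 1 := by
  have h : (sgKappa g : SurfaceGroup g) = PresentedGroup.mk _ (surfaceRelator g) := by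
    rw [sgKappa, List.take_of_length_le (by simp)]
    change _ = PresentedGroup.mk _ (List.ofFn _).prod
    rw [map_list_prod, List.map_ofFn]
    rfl
  exact h.trans (PresentedGroup.one_of_mem rfl)

variable {g : ℕ} {A : Type*} [NormedRing A] [StarRing A] [CStarRing A]
  {ε : ℝ} {π : SurfaceGroup g → unitary A}

theorem norm_map_sgKappa_succ_sub_le (hπ : IsQuasiRep (F0 g) ε π) (k : Fin g)
    {u : unitary A} {δ : ℝ} (hu : ‖(π (sgKappa k) : A) - u‖ ≤ δ) :
    ‖(π (sgKappa (k + 1)) : A) - ↑(u * ⁅π (sgA k), π (sgB k)⁆)‖ ≤ δ + 6 * ε := by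
  rw [sgKappa_succ]
  refine hπ.norm_map_mul_commutator_sub_le ?_ ?_ ?_ ?_ ?_ ?_ ?_ ?_ hu <;>
    exact Set.mem_iUnion.2 ⟨k, by simp⟩

theorem norm_map_sgKappa_sub_prod_le (hπ : IsQuasiRep (F0 g) ε π) {k : ℕ} (hk : k ≤ g) :
    ‖(π (sgKappa k) : A) -
        ↑((List.ofFn fun j : Fin g => ⁅π (sgA j), π (sgB j)⁆).take k).prod‖ ≤ 6 * k * ε := by
  induction k with
  | zero => simp [sgKappa_zero, hπ.1]
  | succ k ih =>
    have step := norm_map_sgKappa_succ_sub_le hπ ⟨k, hk⟩ (ih (by omega))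
    rw [List.prod_take_ofFn_succ _ ⟨k, hk⟩]
    exact step.trans_eq (by push_cast; ring)

end SurfaceGroup

/-- There is a constant `C > 0` depending only on `g` such that for every unital C*-algebra
`A`, every `ε > 0` and every `(F₀, ε)`-representation `π : Γ_g → U(A)`,
`‖∏_{k=1}^g [π(α_k), π(β_k)] - 1‖ ≤ C ε`. -/
theorem statement9 (g : ℕ) (hg : 1 ≤ g) :
    ∃ C > (0 : ℝ),
      ∀ (A : Type*) [NormedRing A] [StarRing A] [CStarRing A] [NormedAlgebra ℂ A]
        [CompleteSpace A] [StarModule ℂ A],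
        ∀ ε : ℝ, 0 < ε → ∀ π : SurfaceGroup g → unitary A,
          IsQuasiRep (F0 g) ε π →
          ‖(((List.ofFn fun k : Fin g => ⁅π (sgA k), π (sgB k)⁆).prod : unitary A) : A) - 1‖ ≤
            C * ε := by
  refine ⟨6 * g, by positivity, fun A _ _ _ _ _ _ ε _ π hπ => ?_⟩
  have h := SurfaceGroup.norm_map_sgKappa_sub_prod_le hπ le_rfl
  rw [SurfaceGroup.sgKappa_self, hπ.1, List.take_of_length_le (by simp), norm_sub_rev] at h
  simpa using h
end

section
/- Let A be a unital C*-algebra, τ a trace on A, and let w, z ∈ U(A) be unitaries with ‖w − 1‖ < 1. Define the path ξ(t) = (1−t)z + t·wz for t ∈ [0, 1]. Then every ξ(t) is invertible and Δ̃_τ(ξ) = (1/2πi) · τ(log w). -/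
/-- For `‖x - 1‖ < 1`, the logarithm `log x = Σ_{n=1}^∞ (-1)^{n+1} (x-1)ⁿ / n`,
written here with the summation index shifted by one. -/
noncomputable def balog {A : Type*} [NormedRing A] [NormedAlgebra ℂ A] [CompleteSpace A]
    (x : A) : A :=
  ∑' n : ℕ, (((-1 : ℂ) ^ n) * ((n : ℂ) + 1)⁻¹) • (x - 1) ^ (n + 1)

/-!
Writing `a = w - 1`, the path factors as `ξ(t) = (1 + t a) z`, so the integrand
`τ(ξ'(t) ξ(t)⁻¹) = τ(a z z⁻¹ (1 + t a)⁻¹) = τ(a (1 + t a)⁻¹)` no longer involves `z`.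
Expanding `a (1 + t a)⁻¹ = Σ (-t)ⁿ aⁿ⁺¹` as a geometric series, dominated by `Σ ‖a‖ⁿ⁺¹`,
and integrating termwise over `[0, 1]` gives exactly the series `log (1 + a)`.
-/

open intervalIntegral

theorem Ring.mul_mul_inverse_mul_of_isUnit {M₀ : Type*} [MonoidWithZero M₀] (a b : M₀) {z : M₀}
    (hz : IsUnit z) : a * z * Ring.inverse (b * z) = a * Ring.inverse b := by
  rw [Ring.inverse_mul (Or.inr hz), mul_assoc, ← mul_assoc z, Ring.mul_inverse_cancel z hz,
    one_mul]

theorem smul_add_one_sub_smul_mul {A : Type*} [Ring A] [Algebra ℝ A] (t : ℝ) (w z : A) :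
    (1 - t) • z + t • (w * z) = (1 + t • (w - 1)) * z := by
  rw [add_mul, one_mul, smul_mul_assoc, sub_mul, one_mul, smul_sub, sub_smul, one_smul]
  abel

theorem integral_neg_pow_zero_one (n : ℕ) : ∫ t in (0 : ℝ)..1, (-t) ^ n = (-1) ^ n / (n + 1) := by
  rw [funext fun t : ℝ => neg_pow t n, integral_const_mul, integral_pow]
  ring

theorem norm_smul_lt_one_of_abs_le_one {E : Type*} [SeminormedAddCommGroup E] [NormedSpace ℝ E]
    {a : E} (ha : ‖a‖ < 1) {t : ℝ} (ht : |t| ≤ 1) : ‖t • a‖ < 1 := by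
  rw [norm_smul, Real.norm_eq_abs]
  nlinarith [abs_nonneg t, norm_nonneg a]

theorem isUnit_one_add_of_norm_lt_one {R : Type*} [NormedRing R] [HasSummableGeomSeries R] {x : R}
    (hx : ‖x‖ < 1) : IsUnit (1 + x) := by
  simpa using isUnit_one_sub_of_norm_lt_one (x := -x) (by rwa [norm_neg])

section BanachAlgebra

variable {A : Type*} [NormedRing A] [NormedAlgebra ℂ A] [CompleteSpace A]

theorem hasSum_mul_inverse_one_add_smul (a : A) {t : ℝ} (h : ‖t • a‖ < 1) :
    HasSum (fun n : ℕ => (-t) ^ n • a ^ (n + 1)) (a * Ring.inverse (1 + t • a)) := by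
  have hgeom := (hasSum_geom_series_inverse (-(t • a)) (by rwa [norm_neg])).mul_left a
  rw [sub_neg_eq_add] at hgeom
  refine hgeom.congr_fun fun n => ?_
  rw [← neg_smul, smul_pow, mul_smul_comm, pow_succ']

theorem intervalIntegrable_mul_inverse_one_add_smul {a : A} (ha : ‖a‖ < 1) :
    IntervalIntegrable (fun t : ℝ => a * Ring.inverse (1 + t • a)) MeasureTheory.volume 0 1 := by
  refine ContinuousOn.intervalIntegrable fun t ht => ?_
  rw [Set.uIcc_of_le zero_le_one] at ht
  obtain ⟨u, hu⟩ := isUnit_one_add_of_norm_lt_one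
    (norm_smul_lt_one_of_abs_le_one ha (abs_le.mpr ⟨by linarith [ht.1], ht.2⟩))
  have hinv : ContinuousAt Ring.inverse (1 + t • a) := hu ▸ NormedRing.inverse_continuousAt u
  have hpath : Continuous fun s : ℝ => 1 + s • a := by fun_prop
  exact (continuousAt_const.mul
    (hinv.comp (f := fun s : ℝ => 1 + s • a) hpath.continuousAt)).continuousWithinAt

theorem hasSum_integral_mul_inverse_one_add_smul {a : A} (ha : ‖a‖ < 1) :
    HasSum (fun n : ℕ => (((-1 : ℂ) ^ n) * ((n : ℂ) + 1)⁻¹) • a ^ (n + 1))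
      (∫ t in (0 : ℝ)..1, a * Ring.inverse (1 + t • a)) := by
  have habs : ∀ t ∈ Set.uIoc (0 : ℝ) 1, |t| ≤ 1 := fun t ht => by
    rw [Set.uIoc_of_le zero_le_one] at ht
    exact abs_le.mpr ⟨by linarith [ht.1], ht.2⟩
  have hdom := hasSum_integral_of_dominated_convergence (μ := MeasureTheory.volume)
    (F := fun n (t : ℝ) => (-t) ^ n • a ^ (n + 1)) (fun n _ => ‖a‖ * ‖a‖ ^ n)
    (fun n => ((continuous_neg.pow n).smul continuous_const).aestronglyMeasurable)
    (fun n => Filter.Eventually.of_forall fun t ht => by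
      rw [norm_smul, norm_pow, norm_neg, Real.norm_eq_abs, ← pow_succ']
      exact (mul_le_of_le_one_left (norm_nonneg _)
        (pow_le_one₀ (abs_nonneg t) (habs t ht))).trans (norm_pow_le' a n.succ_pos))
    (Filter.Eventually.of_forall fun _ _ =>
      (summable_geometric_of_lt_one (norm_nonneg a) ha).mul_left _)
    intervalIntegrable_const
    (Filter.Eventually.of_forall fun t ht =>
      hasSum_mul_inverse_one_add_smul a (norm_smul_lt_one_of_abs_le_one ha (habs t ht)))
  refine hdom.congr_fun fun n => ?_
  rw [intervalIntegral.integral_smul_const, integral_neg_pow_zero_one, ← Complex.coe_smul]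
  push_cast
  rfl

theorem integral_mul_inverse_one_add_smul {a : A} (ha : ‖a‖ < 1) :
    ∫ t in (0 : ℝ)..1, a * Ring.inverse (1 + t • a) = balog (1 + a) := by
  rw [balog, add_sub_cancel_left]
  exact (hasSum_integral_mul_inverse_one_add_smul ha).tsum_eq.symm

end BanachAlgebra

theorem statement13_general {A : Type*} [NormedRing A] [StarRing A]
    [NormedAlgebra ℂ A] [CompleteSpace A]
    (τ : A →L[ℂ] ℂ)
    (w z : unitary A) (hw : ‖(w : A) - 1‖ < 1) :
    (∀ t ∈ Set.Icc (0 : ℝ) 1, IsUnit ((1 - t) • (z : A) + t • ((w : A) * (z : A)))) ∧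
    dhsDet τ 0 1 (fun t => (1 - t) • (z : A) + t • ((w : A) * (z : A)))
        (fun _ => (w : A) * (z : A) - (z : A)) =
      (2 * (Real.pi : ℂ) * Complex.I)⁻¹ * τ (balog (w : A)) := by
  have hz : IsUnit (z : A) := Unitary.isUnit_coe
  refine ⟨fun t ht => ?_, ?_⟩
  · rw [smul_add_one_sub_smul_mul]
    exact (isUnit_one_add_of_norm_lt_one
      (norm_smul_lt_one_of_abs_le_one hw (abs_le.mpr ⟨by linarith [ht.1], ht.2⟩))).mul hz
  · have hintegrand : ∀ t : ℝ,
        ((w : A) * z - z) * Ring.inverse ((1 - t) • (z : A) + t • ((w : A) * z)) =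
          ((w : A) - 1) * Ring.inverse (1 + t • ((w : A) - 1)) := fun t => by
      rw [smul_add_one_sub_smul_mul, ← sub_one_mul, Ring.mul_mul_inverse_mul_of_isUnit _ _ hz]
    simp only [dhsDet, hintegrand]
    rw [τ.intervalIntegral_comp_comm (intervalIntegrable_mul_inverse_one_add_smul hw),
      integral_mul_inverse_one_add_smul hw, add_sub_cancel]

/-- Let `w, z` be unitaries in a unital C*-algebra with a trace `τ` and `‖w - 1‖ < 1`, and let
`ξ(t) = (1-t)z + t·wz` for `t ∈ [0,1]`. Then every `ξ(t)` is invertible and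
`Δ̃_τ(ξ) = (1/2πi) τ(log w)`. -/
theorem statement13 {A : Type*} [NormedRing A] [StarRing A] [CStarRing A]
    [NormedAlgebra ℂ A] [CompleteSpace A] [StarModule ℂ A]
    (τ : A →L[ℂ] ℂ) (hτ : ∀ a b : A, τ (a * b) = τ (b * a))
    (w z : unitary A) (hw : ‖(w : A) - 1‖ < 1) :
    (∀ t ∈ Set.Icc (0 : ℝ) 1, IsUnit ((1 - t) • (z : A) + t • ((w : A) * (z : A)))) ∧
    dhsDet τ 0 1 (fun t => (1 - t) • (z : A) + t • ((w : A) * (z : A)))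
        (fun _ => (w : A) * (z : A) - (z : A)) =
      (2 * (Real.pi : ℂ) * Complex.I)⁻¹ * τ (balog (w : A)) :=
  statement13_general τ w z hw
end
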